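/- Let K be a field, let m ≥ r ≥ 1 be integers, let 𝔪 = (x,y) ⊂ K[x,y], and let f ∈ K[x,y] with f ∈ 𝔪^r and f ∉ 𝔪^{r+1}. Then the image of the principal ideal (f) in the truncated ring A_m = K[x,y]/𝔪^m is a K-vector subspace of dimension binom(m−r+1, 2). -/

import Mathlib

/-!
Multiplication by `f` gives a `K`-linear map `K[x,y] → A_m` whose range is the image of `(f)`.
Since `K[[x,y]]` is a domain, the order (lowest total degree) is additive, so with `ord f = r`
we get `g f ∈ 𝔪^m ↔ g ∈ 𝔪^(m-r)`: the kernel is `𝔪^(m-r)`, and the image of `(f)` is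
isomorphic to `A_(m-r)`. The monomials of degree `< k` form a basis of `A_k`, and there are
`∑_{n<k} (n+1) = C(k+1,2)` of them.
-/

open MvPolynomial Finset

theorem Ideal.finrank_restrictScalars_map_span_singleton (K : Type*) {A : Type*} [CommRing K]
    [CommRing A] [Algebra K A] {I J : Ideal A} {f : A} (hJ : ∀ g, g * f ∈ I ↔ g ∈ J) :
    Module.finrank K ((Ideal.map (Ideal.Quotient.mk I) (Ideal.span {f})).restrictScalars K) =
      Module.finrank K (A ⧸ J.restrictScalars K) := by
  set φ := (Ideal.Quotient.mkₐ K I).toLinearMap ∘ₗ LinearMap.mulRight K f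
  have hφ (g : A) : φ g = Ideal.Quotient.mk I (g * f) := rfl
  have hker : LinearMap.ker φ = J.restrictScalars K := by
    ext g
    rw [LinearMap.mem_ker, hφ, Ideal.Quotient.eq_zero_iff_mem, hJ, Submodule.restrictScalars_mem]
  have hrange : LinearMap.range φ =
      (Ideal.map (Ideal.Quotient.mk I) (Ideal.span {f})).restrictScalars K := by
    ext q
    rw [Submodule.restrictScalars_mem, Ideal.map_span, Set.image_singleton,
      Ideal.mem_span_singleton', LinearMap.mem_range]
    constructor
    · rintro ⟨g, rfl⟩
      exact ⟨Ideal.Quotient.mk I g, by rw [hφ, map_mul]⟩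
    · rintro ⟨a, rfl⟩
      obtain ⟨g, rfl⟩ := Ideal.Quotient.mk_surjective a
      exact ⟨g, by rw [hφ, map_mul]⟩
  rw [← hker, ← hrange]
  exact φ.quotKerEquivRange.finrank_eq.symm

theorem sum_range_add_one_eq_choose_two (k : ℕ) :
    ∑ n ∈ range k, (n + 1) = (k + 1).choose 2 := by
  induction k with
  | zero => rfl
  | succ k ih =>
    rw [sum_range_succ, ih, Nat.choose_succ_succ' (k + 1), Nat.choose_one_right, add_comm]

namespace MvPolynomial

variable {σ R : Type*}

section CommSemiring

variable [CommSemiring R]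

theorem mem_pow_idealOfVars_iff_le_order (n : ℕ) (p : MvPolynomial σ R) :
    p ∈ idealOfVars σ R ^ n ↔ (n : ℕ∞) ≤ (p : MvPowerSeries σ R).order := by
  rw [mem_pow_idealOfVars_iff']
  refine ⟨fun h => MvPowerSeries.nat_le_order fun d hd => by simpa using h d hd,
    fun h d hd => by
      simpa using MvPowerSeries.coeff_of_lt_order (lt_of_lt_of_le (by exact_mod_cast hd) h)⟩

theorem restrictScalars_pow_idealOfVars (k : ℕ) :
    (idealOfVars σ R ^ k).restrictScalars R = restrictSupport R {d | k ≤ d.degree} := by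
  ext p
  rw [Submodule.restrictScalars_mem, mem_pow_idealOfVars_iff, mem_restrictSupport_iff]
  rfl

theorem isCompl_restrictSupport_compl (s : Set (σ →₀ ℕ)) :
    IsCompl (restrictSupport R s) (restrictSupport R sᶜ) := by
  constructor
  · rw [Submodule.disjoint_def]
    intro p hs hc
    rw [← support_eq_empty, ← Finset.coe_eq_empty, ← Set.subset_empty_iff,
      ← Set.inter_compl_self s]
    exact Set.subset_inter hs hc
  · rw [codisjoint_iff, restrictSupport_eq_span, restrictSupport_eq_span, ← Submodule.span_union,
      ← Set.image_union, Set.union_compl_self, Set.image_univ]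
    exact (basisMonomials σ R).span_eq

theorem mul_mem_pow_idealOfVars_add_iff [NoZeroDivisors R] {f g : MvPolynomial σ R}
    {k r : ℕ} (hf : f ∈ idealOfVars σ R ^ r) (hf' : f ∉ idealOfVars σ R ^ (r + 1)) :
    g * f ∈ idealOfVars σ R ^ (k + r) ↔ g ∈ idealOfVars σ R ^ k := by
  rw [mem_pow_idealOfVars_iff_le_order] at hf hf'
  have hord : (f : MvPowerSeries σ R).order = r := by
    refine le_antisymm ?_ hf
    by_contra h
    exact hf' (by push_cast; exact Order.add_one_le_of_lt (not_le.mp h))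
  rw [mem_pow_idealOfVars_iff_le_order, mem_pow_idealOfVars_iff_le_order, coe_mul,
    MvPowerSeries.order_mul, hord, Nat.cast_add]
  exact WithTop.add_le_add_iff_right (ENat.natCast_ne_top r)

end CommSemiring

theorem finrank_restrictSupport [CommRing R] [StrongRankCondition R] (s : Finset (σ →₀ ℕ)) :
    Module.finrank R (restrictSupport R (s : Set (σ →₀ ℕ))) = #s := by
  simp [Module.finrank_eq_card_basis (basisRestrictSupport R _)]

section Fintype

variable [Fintype σ] [DecidableEq σ]

theorem coe_biUnion_finsuppAntidiag (k : ℕ) :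
    ((range k).biUnion fun n => (univ : Finset σ).finsuppAntidiag n : Set (σ →₀ ℕ)) =
      {d | d.degree < k} := by
  ext d
  simp [mem_finsuppAntidiag, Finsupp.degree_eq_sum]

theorem card_biUnion_finsuppAntidiag (k : ℕ) :
    #((range k).biUnion fun n => (univ : Finset σ).finsuppAntidiag n) =
      ∑ n ∈ range k, (Fintype.card σ + n - 1).choose n := by
  rw [card_biUnion]
  · simp [card_finsuppAntidiag_nat_eq_choose]
  · intro a _ b _ hab
    exact disjoint_left.mpr fun d ha hb => hab <|
      (mem_finsuppAntidiag.mp ha).1.symm.trans (mem_finsuppAntidiag.mp hb).1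

theorem finrank_quotient_pow_idealOfVars [CommRing R] [StrongRankCondition R] (k : ℕ) :
    Module.finrank R (MvPolynomial σ R ⧸ (idealOfVars σ R ^ k).restrictScalars R) =
      ∑ n ∈ range k, (Fintype.card σ + n - 1).choose n := by
  have hcompl : {d : σ →₀ ℕ | k ≤ d.degree}ᶜ =
      ((range k).biUnion fun n => (univ : Finset σ).finsuppAntidiag n : Set (σ →₀ ℕ)) := by
    rw [coe_biUnion_finsuppAntidiag]
    ext d
    simp
  rw [restrictScalars_pow_idealOfVars,
    (Submodule.quotientEquivOfIsCompl _ _ (isCompl_restrictSupport_compl _)).finrank_eq,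
    hcompl, finrank_restrictSupport, card_biUnion_finsuppAntidiag]

end Fintype

end MvPolynomial

theorem stmt_1_general (K : Type*) [Field K] (m r : ℕ) (hrm : r ≤ m)
    (f : MvPolynomial (Fin 2) K)
    (hf : f ∈ (Ideal.span {X 0, X 1} : Ideal (MvPolynomial (Fin 2) K)) ^ r)
    (hf' : f ∉ (Ideal.span {X 0, X 1} : Ideal (MvPolynomial (Fin 2) K)) ^ (r + 1)) :
    Module.finrank K
      ↥(Submodule.restrictScalars K
        (Ideal.map
          (Ideal.Quotient.mk ((Ideal.span {X 0, X 1} : Ideal (MvPolynomial (Fin 2) K)) ^ m))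
          (Ideal.span {f}))) =
      (m - r + 1).choose 2 := by
  have h𝔪 : (Ideal.span {X 0, X 1} : Ideal (MvPolynomial (Fin 2) K)) =
      idealOfVars (Fin 2) K := by
    congr 1
    ext
    simp [Fin.exists_fin_two, eq_comm]
  rw [h𝔪] at hf hf' ⊢
  rw [Ideal.finrank_restrictScalars_map_span_singleton K (J := idealOfVars (Fin 2) K ^ (m - r)),
    finrank_quotient_pow_idealOfVars]
  · have hchoose (n : ℕ) : (2 + n - 1).choose n = n + 1 := by
      rw [show 2 + n - 1 = n + 1 by omega, Nat.choose_succ_self_right]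
    simp only [Fintype.card_fin, hchoose]
    exact sum_range_add_one_eq_choose_two _
  · intro g
    have hiff := mul_mem_pow_idealOfVars_add_iff (g := g) (k := m - r) hf hf'
    rwa [Nat.sub_add_cancel hrm] at hiff

set_option synthInstance.maxHeartbeats 1000000 in
set_option maxHeartbeats 1000000 in
/-- key step in the proof of Lemma 2.5.
Let `K` be a field, `m ≥ r ≥ 1`, `𝔪 = (x,y) ⊂ K[x,y]`, and `f ∈ 𝔪^r \ 𝔪^{r+1}`.
Then the image of the principal ideal `(f)` in `A_m = K[x,y]/𝔪^m` is a `K`-vector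
subspace of dimension `C(m−r+1,2)`. -/
theorem stmt_1 (K : Type*) [Field K] (m r : ℕ) (hr : 1 ≤ r) (hrm : r ≤ m)
    (f : MvPolynomial (Fin 2) K)
    (hf : f ∈ (Ideal.span {X 0, X 1} : Ideal (MvPolynomial (Fin 2) K)) ^ r)
    (hf' : f ∉ (Ideal.span {X 0, X 1} : Ideal (MvPolynomial (Fin 2) K)) ^ (r + 1)) :
    Module.finrank K
      ↥(Submodule.restrictScalars K
        (Ideal.map
          (Ideal.Quotient.mk ((Ideal.span {X 0, X 1} : Ideal (MvPolynomial (Fin 2) K)) ^ m))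
          (Ideal.span {f}))) =
      (m - r + 1).choose 2 :=
  stmt_1_general K m r hrm f hf hf'
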